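/- arXiv:1705.06893 — 3 statements merged into one kernel-verified Lean document; each statement's English description precedes it below -/
import Mathlib

section
/- Let X be a locally convex Hausdorff topological vector space and D ⊆ X a nonempty generalized polyhedral convex set, i.e., D = {x ∈ X : Ax = z, ⟨x_i*, x⟩ ≤ α_i, i = 1,…,p} for a continuous surjective linear map A onto a locally convex Hausdorff space Z, z ∈ Z, x_i* ∈ X*, α_i ∈ ℝ. Then there exists a closed linear subspace X_1 of X containing D such that D is a polyhedral convex set in X_1, i.e., D is definable in X_1 by finitely many continuous linear inequalities (and no affine-subspace constraint). -/
/-!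
Take `X₁ := A⁻¹(ℝ ∙ z)`, closed as the preimage of a finite-dimensional subspace. On `X₁` the
constraint `A x = z` only has to fix the coefficient of `z` in `A x`, so it becomes the single
hyperplane `ψ (A x) = ψ z`, where `ψ` is a continuous functional injective on `ℝ ∙ z` (by
Hahn–Banach, one with `ψ z = 1` when `z ≠ 0`); a hyperplane is the intersection of two half-spaces.
-/

open Set

def IsPolyhedral {E : Type*} [AddCommGroup E] [Module ℝ E] [TopologicalSpace E] (S : Set E) :
    Prop :=
  ∃ (n : ℕ) (g : Fin n → E →L[ℝ] ℝ) (β : Fin n → ℝ), S = {x | ∀ i, g i x ≤ β i}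

namespace IsPolyhedral

variable {E : Type*} [AddCommGroup E] [Module ℝ E] [TopologicalSpace E]

theorem setOf_forall_le {p : ℕ} (φ : Fin p → E →L[ℝ] ℝ) (α : Fin p → ℝ) :
    IsPolyhedral {x : E | ∀ i, φ i x ≤ α i} :=
  ⟨p, φ, α, rfl⟩

theorem inter_halfspace {S : Set E} (hS : IsPolyhedral S) (f : E →L[ℝ] ℝ) (c : ℝ) :
    IsPolyhedral (S ∩ {x | f x ≤ c}) := by
  obtain ⟨n, g, β, rfl⟩ := hS
  refine ⟨n + 1, Fin.cons f g, Fin.cons c β, ?_⟩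
  ext x
  simp only [mem_inter_iff, mem_ofPred_eq, Fin.forall_fin_succ, Fin.cons_zero, Fin.cons_succ]
  exact and_comm

theorem inter_hyperplane {S : Set E} (hS : IsPolyhedral S) (f : E →L[ℝ] ℝ) (c : ℝ) :
    IsPolyhedral (S ∩ {x | f x = c}) := by
  have h := (hS.inter_halfspace f c).inter_halfspace (-f) (-c)
  convert h using 1
  ext x
  simp only [mem_inter_iff, mem_ofPred_eq, neg_apply, neg_le_neg_iff,
    le_antisymm_iff, and_assoc]

end IsPolyhedral

theorem SeparatingDual.exists_injOn_span_singleton {R V : Type*} [Field R]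
    [TopologicalSpace R] [IsTopologicalRing R] [AddCommGroup V] [TopologicalSpace V]
    [Module R V] [SeparatingDual R V] (z : V) :
    ∃ ψ : V →L[R] R, InjOn ψ (R ∙ z) := by
  rcases eq_or_ne z 0 with rfl | hz
  · refine ⟨0, ?_⟩
    rw [Submodule.span_singleton_eq_bot.2 rfl, Submodule.bot_coe]
    exact injOn_singleton _ _
  obtain ⟨ψ, hψ⟩ := SeparatingDual.exists_eq_one (R := R) hz
  refine ⟨ψ, ?_⟩
  intro a ha b hb hab
  obtain ⟨s, rfl⟩ := Submodule.mem_span_singleton.1 ha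
  obtain ⟨t, rfl⟩ := Submodule.mem_span_singleton.1 hb
  simp only [map_smul, hψ, smul_eq_mul, mul_one] at hab
  rw [hab]

theorem gpcs_is_pcs_in_closed_subspace_general
    {X Z : Type*} [AddCommGroup X] [Module ℝ X] [TopologicalSpace X]
    [AddCommGroup Z] [Module ℝ Z] [TopologicalSpace Z]
    [IsTopologicalAddGroup Z] [ContinuousSMul ℝ Z] [LocallyConvexSpace ℝ Z] [T2Space Z]
    (A : X →L[ℝ] Z) (z : Z)
    (p : ℕ) (φ : Fin p → X →L[ℝ] ℝ) (α : Fin p → ℝ)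
    (D : Set X) (hD : D = {x : X | A x = z ∧ ∀ i, φ i x ≤ α i}) :
    ∃ X₁ : Submodule ℝ X, IsClosed (X₁ : Set X) ∧ D ⊆ (X₁ : Set X) ∧
      ∃ (n : ℕ) (g : Fin n → X₁ →L[ℝ] ℝ) (β : Fin n → ℝ),
        D = Subtype.val '' {x : X₁ | ∀ i, g i x ≤ β i} := by
  subst hD
  obtain ⟨ψ, hψ⟩ := SeparatingDual.exists_injOn_span_singleton (R := ℝ) z
  set X₁ := (ℝ ∙ z).comap (A : X →ₗ[ℝ] Z)
  have hX₁ : IsClosed (X₁ : Set X) :=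
    (Submodule.closed_of_finiteDimensional (ℝ ∙ z)).preimage A.continuous
  have hDX₁ : {x : X | A x = z ∧ ∀ i, φ i x ≤ α i} ⊆ X₁ := fun x hx => by
    rw [SetLike.mem_coe, Submodule.mem_comap, ContinuousLinearMap.coe_coe, hx.1]
    exact Submodule.mem_span_singleton_self z
  obtain ⟨n, g, β, hS⟩ :=
    (IsPolyhedral.setOf_forall_le (fun i => φ i ∘L X₁.subtypeL) α).inter_hyperplane
      (ψ ∘L A ∘L X₁.subtypeL) (ψ z)
  refine ⟨X₁, hX₁, hDX₁, n, g, β, ?_⟩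
  rw [← hS]
  ext x
  constructor
  · intro hx
    exact ⟨⟨x, hDX₁ hx⟩, ⟨hx.2, by simp [hx.1]⟩, rfl⟩
  · rintro ⟨y, ⟨hφy, hψy⟩, rfl⟩
    exact ⟨hψ y.2 (Submodule.mem_span_singleton_self z) hψy, hφy⟩

/-- Every nonempty generalized polyhedral convex set `D` is contained in a
closed linear subspace `X₁` in which `D` is a polyhedral convex set. -/
theorem gpcs_is_pcs_in_closed_subspace
    {X Z : Type*} [AddCommGroup X] [Module ℝ X] [TopologicalSpace X]
    [IsTopologicalAddGroup X] [ContinuousSMul ℝ X] [LocallyConvexSpace ℝ X] [T2Space X]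
    [AddCommGroup Z] [Module ℝ Z] [TopologicalSpace Z]
    [IsTopologicalAddGroup Z] [ContinuousSMul ℝ Z] [LocallyConvexSpace ℝ Z] [T2Space Z]
    (A : X →L[ℝ] Z) (hA : Function.Surjective A) (z : Z)
    (p : ℕ) (φ : Fin p → X →L[ℝ] ℝ) (α : Fin p → ℝ)
    (D : Set X) (hD : D = {x : X | A x = z ∧ ∀ i, φ i x ≤ α i})
    (hne : D.Nonempty) :
    ∃ X₁ : Submodule ℝ X, IsClosed (X₁ : Set X) ∧ D ⊆ (X₁ : Set X) ∧
      ∃ (n : ℕ) (g : Fin n → X₁ →L[ℝ] ℝ) (β : Fin n → ℝ),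
        D = Subtype.val '' {x : X₁ | ∀ i, g i x ≤ β i} :=
  gpcs_is_pcs_in_closed_subspace_general A z p φ α D hD
end

section
/- Let X, Y be real vector spaces, K ⊆ Y a convex cone containing 0, D ⊆ X convex, f : X → Y a K-function on D, and ℓ(K) = K ∩ (−K). Suppose u, u' ∈ D, w, w' ∈ K, and every point of the segment [f(u)+w, f(u')+w'] lies in E(f(D)+K | K). Then every point of the segment [u, u'] is an efficient solution, i.e., for each λ ∈ [0,1] and u_λ = (1−λ)u + λu', there is no x ∈ D with f(u_λ) − f(x) ∈ K \ ℓ(K). -/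
open Pointwise

theorem Convex.add_mem_of_smul_subset {𝕜 E : Type*} [Field 𝕜] [LinearOrder 𝕜]
    [IsStrictOrderedRing 𝕜] [AddCommMonoid E] [Module 𝕜 E] {K : Set E} (hconv : Convex 𝕜 K)
    (hcone : ∀ t : 𝕜, 0 < t → t • K ⊆ K) {a b : E} (ha : a ∈ K) (hb : b ∈ K) :
    a + b ∈ K := by
  have hmid : (2⁻¹ : 𝕜) • a + (2⁻¹ : 𝕜) • b ∈ K :=
    hconv ha hb (by positivity) (by positivity) (by ring)
  have hdouble := hcone 2 two_pos (Set.smul_mem_smul_set hmid)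
  rwa [smul_add, smul_inv_smul₀ two_ne_zero, smul_inv_smul₀ two_ne_zero] at hdouble

theorem add_mem_diff_inter_neg {Y : Type*} [AddCommGroup Y] {K : Set Y}
    (hadd : ∀ a ∈ K, ∀ b ∈ K, a + b ∈ K) {a b : Y} (ha : a ∈ K \ (K ∩ -K))
    (hb : b ∈ K) :
    a + b ∈ K \ (K ∩ -K) := by
  refine ⟨hadd a ha.1 b hb, fun ⟨_, hneg⟩ ↦ ha.2 ⟨ha.1, ?_⟩⟩
  have hsum := hadd _ hneg b hb
  rwa [show -(a + b) + b = -a by abel] at hsum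

theorem convexComb_add_sub_apply_mem {X Y : Type*} [AddCommGroup X] [Module ℝ X]
    [AddCommGroup Y] [Module ℝ Y] {K : Set Y} (hconv : Convex ℝ K)
    (hcone : ∀ t : ℝ, 0 < t → t • K ⊆ K) {D : Set X} {f : X → Y}
    (hf : ∀ x₁ ∈ D, ∀ x₂ ∈ D, ∀ l ∈ Set.Icc (0:ℝ) 1,
      (1 - l) • f x₁ + l • f x₂ - f ((1 - l) • x₁ + l • x₂) ∈ K)
    {u u' : X} (hu : u ∈ D) (hu' : u' ∈ D) {w w' : Y} (hw : w ∈ K) (hw' : w' ∈ K)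
    {l : ℝ} (hl : l ∈ Set.Icc (0:ℝ) 1) :
    (1 - l) • (f u + w) + l • (f u' + w') - f ((1 - l) • u + l • u') ∈ K := by
  have hwl : (1 - l) • w + l • w' ∈ K := hconv hw hw' (by linarith [hl.2]) hl.1 (by ring)
  have hsum := hconv.add_mem_of_smul_subset hcone (hf u hu u' hu' l hl) hwl
  convert hsum using 1
  simp only [smul_add]
  abel

theorem segment_efficient_solutions_general
    {X Y : Type*} [AddCommGroup X] [Module ℝ X] [AddCommGroup Y] [Module ℝ Y]
    (K : Set Y) (hconv : Convex ℝ K) (hcone : ∀ t : ℝ, 0 < t → t • K ⊆ K)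
    (h0 : (0 : Y) ∈ K)
    (D : Set X) (f : X → Y)
    (hf : ∀ x₁ ∈ D, ∀ x₂ ∈ D, ∀ l ∈ Set.Icc (0:ℝ) 1,
      (1 - l) • f x₁ + l • f x₂ - f ((1 - l) • x₁ + l • x₂) ∈ K)
    (u u' : X) (hu : u ∈ D) (hu' : u' ∈ D)
    (w w' : Y) (hw : w ∈ K) (hw' : w' ∈ K)
    (hseg : segment ℝ (f u + w) (f u' + w') ⊆
      {y ∈ f '' D + K | ∀ y' ∈ f '' D + K, y - y' ∉ K \ (K ∩ -K)}) :
    ∀ l ∈ Set.Icc (0:ℝ) 1, ∀ x ∈ D,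
      f ((1 - l) • u + l • u') - f x ∉ K \ (K ∩ -K) := by
  intro l hl x hx hdom
  have hy : (1 - l) • (f u + w) + l • (f u' + w') ∈ segment ℝ (f u + w) (f u' + w') :=
    ⟨1 - l, l, by linarith [hl.2], hl.1, by ring, rfl⟩
  -- This point of the segment lies above `f ((1 - l) • u + l • u')`,
  -- so it dominates `f x` strictly.
  refine (hseg hy).2 (f x + 0) (Set.add_mem_add ⟨x, hx, rfl⟩ h0) ?_
  have hstrict := add_mem_diff_inter_neg
    (fun _ ha _ hb ↦ hconv.add_mem_of_smul_subset hcone ha hb) hdom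
    (convexComb_add_sub_apply_mem hconv hcone hf hu hu' hw hw' hl)
  convert hstrict using 1
  abel

/-- If the segment `[f(u)+w, f(u')+w']` lies in `E(f(D)+K | K)`, then every
point of `[u, u']` is an efficient solution. -/
theorem segment_efficient_solutions
    {X Y : Type*} [AddCommGroup X] [Module ℝ X] [AddCommGroup Y] [Module ℝ Y]
    (K : Set Y) (hconv : Convex ℝ K) (hcone : ∀ t : ℝ, 0 < t → t • K ⊆ K)
    (h0 : (0 : Y) ∈ K)
    (D : Set X) (hD : Convex ℝ D) (f : X → Y)
    (hf : ∀ x₁ ∈ D, ∀ x₂ ∈ D, ∀ l ∈ Set.Icc (0:ℝ) 1,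
      (1 - l) • f x₁ + l • f x₂ - f ((1 - l) • x₁ + l • x₂) ∈ K)
    (u u' : X) (hu : u ∈ D) (hu' : u' ∈ D)
    (w w' : Y) (hw : w ∈ K) (hw' : w' ∈ K)
    (hseg : segment ℝ (f u + w) (f u' + w') ⊆
      {y ∈ f '' D + K | ∀ y' ∈ f '' D + K, y - y' ∉ K \ (K ∩ -K)}) :
    ∀ l ∈ Set.Icc (0:ℝ) 1, ∀ x ∈ D,
      f ((1 - l) • u + l • u') - f x ∉ K \ (K ∩ -K) :=
  segment_efficient_solutions_general K hconv hcone h0 D f hf u u' hu hu' w w' hw hw' hseg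
end

section
/- Let X, Y be locally convex Hausdorff topological vector spaces, P₁ = {x : ⟨x₂*, x⟩ ≥ 0}, P₂ = {x : ⟨x₂*, x⟩ ≤ 0} for a continuous linear functional x₂* on X = Y, T : X → X a continuous linear map with ker T = ker x₂* and range spanned by a vector e₁ with x₂*(e₁) = 0, specifically Tx = ⟨x₂*, x⟩ e₁. Define f(x) = x − Tx on P₁ and f(x) = x + Tx on P₂, and let K = {y : ⟨x₁*, y⟩ ≤ 0, ⟨x₂*, y⟩ ≤ 0} where x₁* is a continuous linear functional with x₁*(e₁) = 1 and x₂*(e₁) = 0. Then f is a K-function on X (i.e., (1−λ)f(x₁) + λf(x₂) − f((1−λ)x₁+λx₂) ∈ K for all x₁, x₂ ∈ X, λ ∈ [0,1]). -/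
/-!
On both half-spaces `f x = x - |⟨x₂*, x⟩| • e₁`. Hence the defect
`(1 - λ) f a + λ f b - f ((1 - λ) a + λ b)` is a multiple `t • e₁` of `e₁`, and `t ≤ 0` because
`x ↦ |⟨x₂*, x⟩|` is convex. Since `⟨x₁*, e₁⟩ = 1` and `⟨x₂*, e₁⟩ = 0`, such a multiple lies in `K`.
-/

section

variable {X : Type*} [AddCommGroup X] [Module ℝ X]

lemma eq_sub_abs_smul_of_piecewise {φ : X → ℝ} {e : X} {f : X → X}
    (hpos : ∀ x, 0 ≤ φ x → f x = x - φ x • e) (hneg : ∀ x, φ x ≤ 0 → f x = x + φ x • e)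
    (x : X) : f x = x - |φ x| • e := by
  rcases le_total 0 (φ x) with h | h
  · rw [hpos x h, abs_of_nonneg h]
  · rw [hneg x h, abs_of_nonpos h, neg_smul, sub_neg_eq_add]

lemma abs_map_convexComb_le {F : Type*} [FunLike F X ℝ] [LinearMapClass F ℝ X ℝ] (φ : F)
    (a b : X) {l : ℝ} (hl : l ∈ Set.Icc (0 : ℝ) 1) :
    |φ ((1 - l) • a + l • b)| ≤ (1 - l) * |φ a| + l * |φ b| := by
  obtain ⟨hl0, hl1⟩ := hl
  calc |φ ((1 - l) • a + l • b)| = |(1 - l) * φ a + l * φ b| := by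
        rw [map_add, map_smul, map_smul, smul_eq_mul, smul_eq_mul]
    _ ≤ |(1 - l) * φ a| + |l * φ b| := abs_add_le _ _
    _ = (1 - l) * |φ a| + l * |φ b| := by
        rw [abs_mul, abs_mul, abs_of_nonneg (sub_nonneg.mpr hl1), abs_of_nonneg hl0]

end

theorem piecewise_map_K_function_general
    {X : Type*} [AddCommGroup X] [Module ℝ X] [TopologicalSpace X]
    (x₁ x₂ : X →L[ℝ] ℝ) (e₁ : X) (h₁ : x₁ e₁ = 1) (h₂ : x₂ e₁ = 0)
    (f : X → X)
    (hfP₁ : ∀ x : X, 0 ≤ x₂ x → f x = x - (x₂ x) • e₁)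
    (hfP₂ : ∀ x : X, x₂ x ≤ 0 → f x = x + (x₂ x) • e₁) :
    ∀ a b : X, ∀ l ∈ Set.Icc (0:ℝ) 1,
      (1 - l) • f a + l • f b - f ((1 - l) • a + l • b) ∈
        {y : X | x₁ y ≤ 0 ∧ x₂ y ≤ 0} := by
  intro a b l hl
  have hf := eq_sub_abs_smul_of_piecewise hfP₁ hfP₂
  have hdefect : (1 - l) • f a + l • f b - f ((1 - l) • a + l • b)
      = (|x₂ ((1 - l) • a + l • b)| - ((1 - l) * |x₂ a| + l * |x₂ b|)) • e₁ := by
    simp only [hf]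
    module
  have hconvex := abs_map_convexComb_le x₂ a b hl
  rw [hdefect]
  constructor
  · rw [map_smul, h₁, smul_eq_mul, mul_one]
    linarith
  · rw [map_smul, h₂, smul_zero]

/-- The piecewise linear map `f(x) = x - ⟨x₂*,x⟩e₁` on `{⟨x₂*,x⟩ ≥ 0}` and
`f(x) = x + ⟨x₂*,x⟩e₁` on `{⟨x₂*,x⟩ ≤ 0}` is a `K`-function on `X`, where
`K = {y : ⟨x₁*,y⟩ ≤ 0, ⟨x₂*,y⟩ ≤ 0}`. -/
theorem piecewise_map_K_function
    {X : Type*} [AddCommGroup X] [Module ℝ X] [TopologicalSpace X]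
    [IsTopologicalAddGroup X] [ContinuousSMul ℝ X] [LocallyConvexSpace ℝ X] [T2Space X]
    (x₁ x₂ : X →L[ℝ] ℝ) (e₁ : X) (h₁ : x₁ e₁ = 1) (h₂ : x₂ e₁ = 0)
    (f : X → X)
    (hfP₁ : ∀ x : X, 0 ≤ x₂ x → f x = x - (x₂ x) • e₁)
    (hfP₂ : ∀ x : X, x₂ x ≤ 0 → f x = x + (x₂ x) • e₁) :
    ∀ a b : X, ∀ l ∈ Set.Icc (0:ℝ) 1,
      (1 - l) • f a + l • f b - f ((1 - l) • a + l • b) ∈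
        {y : X | x₁ y ≤ 0 ∧ x₂ y ≤ 0} :=
  piecewise_map_K_function_general x₁ x₂ e₁ h₁ h₂ f hfP₁ hfP₂
end
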